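/- arXiv:2305.05795 — 2 statements merged into one kernel-verified Lean document; each statement's English description precedes it below -/
import Mathlib

section
/- Let ε : M_n(ℂ) → M_m(ℂ) and ε' : M_{n'}(ℂ) → M_{m'}(ℂ) be completely positive trace-preserving maps. If ε is an extreme point of the convex set CPT(n,m) and ε' is an extreme point of CPT(n',m'), then their tensor product ε ⊗ ε' is an extreme point of CPT(n·n', m·m'). -/
open Matrix Kronecker

/-- A linear map between complex matrix algebras is completely positive iff it admits a
Kraus representation `Φ A = ∑ k, E k * A * (E k)ᴴ` for a finite family of matrices `E`. -/
def IsCP {ι κ : Type*} [Fintype ι]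
    (Φ : Matrix ι ι ℂ →ₗ[ℂ] Matrix κ κ ℂ) : Prop :=
  ∃ (N : ℕ) (E : Fin N → Matrix κ ι ℂ), ∀ A, Φ A = ∑ k, E k * A * (E k)ᴴ

/-- Trace preserving. -/
def IsTP {ι κ : Type*} [Fintype ι] [Fintype κ]
    (Φ : Matrix ι ι ℂ →ₗ[ℂ] Matrix κ κ ℂ) : Prop :=
  ∀ A, (Φ A).trace = A.trace

/-- Unital: sends the identity matrix to the identity matrix. -/
def IsUnital {ι κ : Type*} [Fintype ι] [DecidableEq ι] [DecidableEq κ]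
    (Φ : Matrix ι ι ℂ →ₗ[ℂ] Matrix κ κ ℂ) : Prop :=
  Φ 1 = 1

/-- The set of completely positive trace-preserving maps. -/
def CPTset (ι κ : Type*) [Fintype ι] [Fintype κ] :
    Set (Matrix ι ι ℂ →ₗ[ℂ] Matrix κ κ ℂ) :=
  {Φ | IsCP Φ ∧ IsTP Φ}

/-- The set of unital completely positive maps. -/
def UCPset (ι κ : Type*) [Fintype ι] [DecidableEq ι] [DecidableEq κ] :
    Set (Matrix ι ι ℂ →ₗ[ℂ] Matrix κ κ ℂ) :=
  {Φ | IsCP Φ ∧ IsUnital Φ}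

/-- The set of unital completely positive trace-preserving maps. -/
def UCPTset (ι : Type*) [Fintype ι] [DecidableEq ι] :
    Set (Matrix ι ι ℂ →ₗ[ℂ] Matrix ι ι ℂ) :=
  {Φ | IsCP Φ ∧ IsTP Φ ∧ IsUnital Φ}

/-- The Choi rank of a map: the minimal number of Kraus operators in a Kraus
representation. -/
noncomputable def CR {ι κ : Type*} [Fintype ι]
    (Φ : Matrix ι ι ℂ →ₗ[ℂ] Matrix κ κ ℂ) : ℕ :=
  sInf {N : ℕ | ∃ E : Fin N → Matrix κ ι ℂ, ∀ A, Φ A = ∑ k, E k * A * (E k)ᴴ}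

/-!
Write the Choi matrix of `ε` as `V * Vᴴ` with `V` of full column rank; the columns of `V` are the
vectorised Kraus operators `E s` of `ε`. By Choi's theorem, `ε` is extreme among CPT maps iff
`c ↦ tr₂ (V * c * Vᴴ)` is injective: the directions in which the Choi matrix can move inside the
positive cone are the matrices `V * c * Vᴴ`, and trace preservation asks that `tr₂` stays fixed.
Up to reordering the tensor factors, the Choi matrix of `ε ⊗ ε'` is factored by `V ⊗ₖ V'`, and
its map `c ↦ tr₂ (⋯)` sends `a ⊗ₖ b` to the Kronecker product of the images of `a` and `b` under
the maps of `ε` and `ε'`. Such a map sends a basis to Kronecker products of two linearly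
independent families, which are linearly independent, so it is injective.
-/
open scoped ComplexOrder

namespace Matrix

variable {R : Type*} [CommSemiring R] {ι κ ι' κ' : Type*} [Fintype κ] [Fintype κ']

def partialTrace : Matrix (ι × κ) (ι × κ) R →ₗ[R] Matrix ι ι R where
  toFun C := of fun i j => ∑ a, C (i, a) (j, a)
  map_add' C D := by ext; simp [Finset.sum_add_distrib]
  map_smul' r C := by ext; simp [Finset.mul_sum]

@[simp]
lemma partialTrace_apply (C : Matrix (ι × κ) (ι × κ) R) (i j : ι) :
    partialTrace C i j = ∑ a, C (i, a) (j, a) := rfl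

lemma partialTrace_conjTranspose [StarRing R] (C : Matrix (ι × κ) (ι × κ) R) :
    partialTrace Cᴴ = (partialTrace C)ᴴ := by
  ext; simp

/-- If `V (i, a) s = E s a i` for Kraus operators `E s`, then `partialTraceConj V (single s t 1)`
is the transpose of `(E t)ᴴ * E s`, so injectivity of `partialTraceConj V` is Choi's condition
that the `(E t)ᴴ * E s` are linearly independent. -/
def partialTraceConj [StarRing R] {S : Type*} [Fintype S] (V : Matrix (ι × κ) S R) :
    Matrix S S R →ₗ[R] Matrix ι ι R :=
  partialTrace ∘ₗ mulRightLinearMap _ R Vᴴ ∘ₗ mulLeftLinearMap _ R V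

@[simp]
lemma partialTraceConj_apply [StarRing R] {S : Type*} [Fintype S] (V : Matrix (ι × κ) S R)
    (c : Matrix S S R) : partialTraceConj V c = partialTrace (V * c * Vᴴ) := rfl

lemma partialTraceConj_conjTranspose [StarRing R] {S : Type*} [Fintype S]
    (V : Matrix (ι × κ) S R) (c : Matrix S S R) :
    partialTraceConj V cᴴ = (partialTraceConj V c)ᴴ := by
  simp [← partialTrace_conjTranspose, conjTranspose_mul, Matrix.mul_assoc]

lemma partialTrace_submatrix_kronecker (X : Matrix (ι × κ) (ι × κ) R)
    (Y : Matrix (ι' × κ') (ι' × κ') R) :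
    partialTrace ((X ⊗ₖ Y).submatrix (Equiv.prodProdProdComm ι ι' κ κ')
      (Equiv.prodProdProdComm ι ι' κ κ')) = partialTrace X ⊗ₖ partialTrace Y := by
  ext ⟨i, i'⟩ ⟨j, j'⟩
  simp [Fintype.sum_prod_type, Finset.sum_mul_sum]

end Matrix

section Choi

variable {R : Type*} [CommSemiring R] {ι κ : Type*} [Fintype ι] [DecidableEq ι]

lemma LinearMap.apply_eq_sum_single {M : Type*} [AddCommMonoid M] [Module R M]
    (Φ : Matrix ι ι R →ₗ[R] M) (A : Matrix ι ι R) :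
    Φ A = ∑ i, ∑ j, A i j • Φ (Matrix.single i j 1) := by
  conv_lhs => rw [matrix_eq_sum_single A]
  simp only [map_sum]
  refine Finset.sum_congr rfl fun i _ => Finset.sum_congr rfl fun j _ => ?_
  rw [← map_smul, smul_single, smul_eq_mul, mul_one]

def choi : (Matrix ι ι R →ₗ[R] Matrix κ κ R) ≃ₗ[R] Matrix (ι × κ) (ι × κ) R where
  toFun Φ := of fun x y => Φ (single x.1 y.1 1) x.2 y.2
  invFun C :=
    { toFun A := of fun a b => ∑ i, ∑ j, A i j * C (i, a) (j, b)
      map_add' A B := by ext; simp [add_mul, Finset.sum_add_distrib]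
      map_smul' r A := by ext; simp [Finset.mul_sum, mul_assoc] }
  map_add' Φ Ψ := rfl
  map_smul' r Φ := rfl
  left_inv Φ := by
    ext A a b
    simp [Φ.apply_eq_sum_single A, Matrix.sum_apply]
  right_inv C := by
    ext ⟨i, a⟩ ⟨j, b⟩
    simp [single_apply, ite_and]

@[simp]
lemma choi_apply (Φ : Matrix ι ι R →ₗ[R] Matrix κ κ R) (i j : ι) (a b : κ) :
    choi Φ (i, a) (j, b) = Φ (single i j 1) a b := rfl

end Choi

lemma Matrix.submatrix_mul_submatrix_of_forall_eq_zero {R l m n S : Type*} [Semiring R]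
    [Fintype m] [Fintype S] {A : Matrix l m R} (B : Matrix m n R) (f : S ↪ m)
    (hA : ∀ k ∉ Set.range f, ∀ x, A x k = 0) : A.submatrix id f * B.submatrix f id = A * B := by
  ext x y
  exact Fintype.sum_of_injective f f.injective _ _
    (fun k hk => by simp [hA k hk]) fun _ => rfl

theorem Matrix.PosSemidef.exists_eq_mul_conjTranspose {𝕜 n : Type*} [RCLike 𝕜] [Fintype n]
    [DecidableEq n] {C : Matrix n n 𝕜} (hC : C.PosSemidef) :
    ∃ (r : ℕ) (V : Matrix n (Fin r) 𝕜), C = V * Vᴴ ∧ (Vᴴ * V).PosDef := by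
  set U : Matrix n n 𝕜 := (hC.1.eigenvectorUnitary : Matrix n n 𝕜)
  set μ := hC.1.eigenvalues
  set D : Matrix n n 𝕜 := diagonal fun k => (√(μ k) : 𝕜)
  set B : Matrix n n 𝕜 := U * D
  have hD : Dᴴ = D := by simp [D, diagonal_conjTranspose]
  have hDD : D * D = diagonal (RCLike.ofReal ∘ μ) := by
    rw [diagonal_mul_diagonal]
    congr with k
    rw [Function.comp_apply, ← RCLike.ofReal_mul, Real.mul_self_sqrt (hC.eigenvalues_nonneg k)]
  have hB : C = B * Bᴴ := by
    conv_lhs => rw [hC.1.spectral_theorem, Unitary.conjStarAlgAut_apply, ← hDD]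
    rw [star_eq_conjTranspose, conjTranspose_mul, hD, Matrix.mul_assoc, Matrix.mul_assoc,
      Matrix.mul_assoc]
  have hBB : Bᴴ * B = diagonal (RCLike.ofReal ∘ μ) := by
    have hUU : Uᴴ * U = 1 := Unitary.star_mul_self_of_mem hC.1.eigenvectorUnitary.2
    rw [conjTranspose_mul, hD, Matrix.mul_assoc, ← Matrix.mul_assoc Uᴴ, hUU, Matrix.one_mul, hDD]
  set f : Fin (Fintype.card {k // μ k ≠ 0}) ↪ n :=
    (Fintype.equivFin _).symm.toEmbedding.trans (Function.Embedding.subtype _)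
  have hf : ∀ s, μ (f s) ≠ 0 := fun s => ((Fintype.equivFin _).symm s).2
  refine ⟨_, B.submatrix id f, ?_, ?_⟩
  · rw [conjTranspose_submatrix, submatrix_mul_submatrix_of_forall_eq_zero _ _ fun k hk x => ?_,
      hB]
    have : μ k = 0 := by_contra fun h => hk ⟨Fintype.equivFin _ ⟨k, h⟩, by simp [f]⟩
    simp [B, D, mul_diagonal, this]
  · rw [conjTranspose_submatrix, ← submatrix_mul _ _ _ _ _ Function.bijective_id, hBB,
      submatrix_diagonal_embedding, posDef_diagonal_iff]
    exact fun s => by simpa using (hC.eigenvalues_nonneg (f s)).lt_of_ne' (hf s)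

section Channel

variable {ι κ : Type*} [Fintype ι] [DecidableEq ι]

def krausMap {σ : Type*} [Fintype σ] (E : σ → Matrix κ ι ℂ) :
    Matrix ι ι ℂ →ₗ[ℂ] Matrix κ κ ℂ where
  toFun A := ∑ s, E s * A * (E s)ᴴ
  map_add' A B := by simp only [Matrix.mul_add, Matrix.add_mul, Finset.sum_add_distrib]
  map_smul' c A := by simp [Finset.smul_sum, Matrix.mul_smul, Matrix.smul_mul]

lemma choi_krausMap {σ : Type*} [Fintype σ] (E : σ → Matrix κ ι ℂ) :
    choi (krausMap E) = (of fun x s => E s x.2 x.1) * (of fun x s => E s x.2 x.1)ᴴ := by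
  ext ⟨i, a⟩ ⟨j, b⟩
  simp [krausMap, mul_apply, single_apply, Matrix.sum_apply, ite_and]

lemma isCP_iff_posSemidef_choi [Fintype κ] {Φ : Matrix ι ι ℂ →ₗ[ℂ] Matrix κ κ ℂ} :
    IsCP Φ ↔ (choi Φ).PosSemidef := by
  classical
  constructor
  · rintro ⟨N, E, hE⟩
    rw [show Φ = krausMap E from LinearMap.ext hE, choi_krausMap]
    exact posSemidef_self_mul_conjTranspose _
  · intro h
    obtain ⟨r, V, hV, -⟩ := h.exists_eq_mul_conjTranspose
    have hΦ : Φ = krausMap fun s => of fun a i => V (i, a) s :=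
      choi.injective (by rw [choi_krausMap, hV]; rfl)
    exact ⟨r, _, fun A => by rw [hΦ]; rfl⟩

lemma isTP_iff_partialTrace_choi [Fintype κ] {Φ : Matrix ι ι ℂ →ₗ[ℂ] Matrix κ κ ℂ} :
    IsTP Φ ↔ partialTrace (choi Φ) = 1 := by
  have hΦ : ∀ i j, (Φ (single i j 1)).trace = partialTrace (choi Φ) i j := fun _ _ => rfl
  have h1 : ∀ i j, (single i j (1 : ℂ)).trace = (1 : Matrix ι ι ℂ) i j := fun i j => by
    rcases eq_or_ne i j with rfl | h
    · simp
    · rw [trace_single_eq_of_ne _ _ _ h, one_apply_ne h]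
  refine ⟨fun h => ext fun i j => by rw [← hΦ, h, h1], fun h A => ?_⟩
  suffices traceLinearMap κ ℂ ℂ ∘ₗ Φ = traceLinearMap ι ℂ ℂ from LinearMap.congr_fun this A
  refine (stdBasis ℂ ι ι).ext fun ⟨i, j⟩ => ?_
  simp only [stdBasis_eq_single, LinearMap.comp_apply, traceLinearMap_apply]
  rw [hΦ, h, h1]

end Channel

def choiCPTset (ι κ : Type*) [Fintype ι] [Fintype κ] [DecidableEq ι] :
    Set (Matrix (ι × κ) (ι × κ) ℂ) :=
  {C | C.PosSemidef ∧ partialTrace C = 1}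

section ChoiCPT

variable {ι κ : Type*} [Fintype ι] [Fintype κ] [DecidableEq ι]

lemma image_choi_CPTset : choi '' CPTset ι κ = choiCPTset ι κ := by
  ext C
  constructor
  · rintro ⟨Φ, ⟨hCP, hTP⟩, rfl⟩
    exact ⟨isCP_iff_posSemidef_choi.mp hCP, isTP_iff_partialTrace_choi.mp hTP⟩
  · rintro ⟨hC, hC1⟩
    refine ⟨choi.symm C, ⟨?_, ?_⟩, choi.apply_symm_apply C⟩
    · rwa [isCP_iff_posSemidef_choi, choi.apply_symm_apply]
    · rwa [isTP_iff_partialTrace_choi, choi.apply_symm_apply]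

lemma mem_extremePoints_CPTset_iff {Φ : Matrix ι ι ℂ →ₗ[ℂ] Matrix κ κ ℂ} :
    Φ ∈ Set.extremePoints ℝ (CPTset ι κ) ↔ choi Φ ∈ Set.extremePoints ℝ (choiCPTset ι κ) := by
  rw [← image_choi_CPTset]
  exact choi.injective.mem_set_image.symm.trans
    (Iff.of_eq (congrArg (choi Φ ∈ ·) (image_extremePoints (choi.restrictScalars ℝ) _)))

end ChoiCPT

lemma eq_zero_of_add_mem_of_sub_mem_of_mem_extremePoints {𝕜 E : Type*} [Field 𝕜] [LinearOrder 𝕜]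
    [IsStrictOrderedRing 𝕜] [AddCommGroup E] [Module 𝕜 E] {s : Set E} {x y : E}
    (hx : x ∈ Set.extremePoints 𝕜 s) (hadd : x + y ∈ s) (hsub : x - y ∈ s) : y = 0 := by
  have hseg : x ∈ openSegment 𝕜 (x + y) (x - y) :=
    ⟨1 / 2, 1 / 2, by norm_num, by norm_num, by norm_num, by module⟩
  simpa using (mem_extremePoints_iff_left.mp hx).2 _ hadd _ hsub hseg

namespace Matrix

variable {𝕜 n S : Type*} [RCLike 𝕜] [Fintype n] [Fintype S] [DecidableEq S]

lemma eq_zero_of_mul_mul_conjTranspose_eq_zero {V : Matrix n S 𝕜} (hV : (Vᴴ * V).PosDef)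
    {c : Matrix S S 𝕜} (h : V * c * Vᴴ = 0) : c = 0 := by
  have : Vᴴ * V * c * (Vᴴ * V) = 0 := by
    rw [show Vᴴ * V * c * (Vᴴ * V) = Vᴴ * (V * c * Vᴴ) * V by simp only [Matrix.mul_assoc], h,
      Matrix.mul_zero, Matrix.zero_mul]
  rwa [hV.isUnit.mul_left_eq_zero, hV.isUnit.mul_right_eq_zero] at this

lemma exists_eq_mul_mul_conjTranspose_of_le {V : Matrix n S 𝕜} (hV : (Vᴴ * V).PosDef)
    {A : Matrix n n 𝕜} (hA : A.PosSemidef) (hAV : (V * Vᴴ - A).PosSemidef) :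
    ∃ c : Matrix S S 𝕜, A = V * c * Vᴴ := by
  -- `P` is the orthogonal projection onto the range of `V`; `A` vanishes on `ker Vᴴ`.
  set P := V * (Vᴴ * V)⁻¹ * Vᴴ
  have hker : ∀ x, Vᴴ *ᵥ x = 0 → A *ᵥ x = 0 := fun x hx => by
    rw [← hA.dotProduct_mulVec_zero_iff]
    have h := hAV.dotProduct_mulVec_nonneg x
    rw [sub_mulVec, dotProduct_sub, ← mulVec_mulVec, hx, mulVec_zero, dotProduct_zero,
      zero_sub, neg_nonneg] at h
    exact le_antisymm h (hA.dotProduct_mulVec_nonneg x)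
  have hVP : Vᴴ * P = Vᴴ := by
    rw [← Matrix.mul_assoc, ← Matrix.mul_assoc,
      Matrix.mul_nonsing_inv _ ((isUnit_iff_isUnit_det _).mp hV.isUnit), Matrix.one_mul]
  have hAP : A * P = A := ext_iff_mulVec.mpr fun x => by
    have h := hker (x - P *ᵥ x) (by rw [mulVec_sub, mulVec_mulVec, hVP, sub_self])
    rwa [mulVec_sub, sub_eq_zero, mulVec_mulVec, eq_comm] at h
  have hPA : P * A = A := by
    have hP : Pᴴ = P := by
      simp only [P, conjTranspose_mul, conjTranspose_conjTranspose, conjTranspose_nonsing_inv,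
        hV.1.eq, Matrix.mul_assoc]
    rw [← hA.1.eq, ← hP, ← conjTranspose_mul, hAP]
  exact ⟨(Vᴴ * V)⁻¹ * Vᴴ * A * V * (Vᴴ * V)⁻¹, by
    conv_lhs => rw [← hPA, ← hAP]
    simp only [P, Matrix.mul_assoc]⟩

end Matrix

open scoped Matrix.Norms.L2Operator in
lemma Matrix.IsHermitian.posSemidef_one_add {n : Type*} [Fintype n] [DecidableEq n]
    {d : Matrix n n ℂ} (hd : d.IsHermitian) (h : ‖d‖ ≤ 1) : (1 + d).PosSemidef := by
  open scoped MatrixOrder in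
  have h1 : -(algebraMap ℝ _ ‖d‖) ≤ d := hd.isSelfAdjoint.neg_algebraMap_norm_le_self
  rw [le_iff, sub_neg_eq_add, Algebra.algebraMap_eq_smul_one] at h1
  rw [show 1 + d = (d + ‖d‖ • 1) + (1 - ‖d‖) • (1 : Matrix n n ℂ) by
    rw [sub_smul, one_smul]; abel]
  exact h1.add (PosSemidef.one.smul (sub_nonneg.mpr h))

section Extreme

variable {ι κ S : Type*} [Fintype ι] [Fintype κ] [DecidableEq ι] [Fintype S] [DecidableEq S]

lemma mul_mul_conjTranspose_eq_zero_of_mem_extremePoints {V : Matrix (ι × κ) S ℂ}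
    (hV : V * Vᴴ ∈ Set.extremePoints ℝ (choiCPTset ι κ)) {c : Matrix S S ℂ}
    (hc : c.IsHermitian) (h : partialTraceConj V c = 0) : V * c * Vᴴ = 0 := by
  open scoped Matrix.Norms.L2Operator in
  obtain rfl | hc0 := eq_or_ne c 0
  · simp
  have hmem : ∀ e : Matrix S S ℂ, e.IsHermitian → ‖e‖ ≤ 1 → partialTraceConj V e = 0 →
      V * Vᴴ + V * e * Vᴴ ∈ choiCPTset ι κ := fun e he he1 he0 => by
    refine ⟨?_, ?_⟩
    · rw [show V * Vᴴ + V * e * Vᴴ = V * (1 + e) * Vᴴ by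
        rw [Matrix.mul_add, Matrix.add_mul, Matrix.mul_one]]
      exact (he.posSemidef_one_add he1).mul_mul_conjTranspose_same V
    · rw [map_add, ← partialTraceConj_apply, he0, add_zero]
      exact hV.1.2
  -- `V * Vᴴ` is the midpoint of `V * (1 ± d) * Vᴴ`.
  set d := ‖c‖⁻¹ • c
  have hd : d.IsHermitian := by simp [d, IsHermitian, conjTranspose_smul, hc.eq]
  have hd1 : ‖d‖ ≤ 1 := by simp [d, norm_smul, hc0]
  have hd0 : partialTraceConj V d = 0 := by simp [d, h]
  have hVd := eq_zero_of_add_mem_of_sub_mem_of_mem_extremePoints hV (hmem d hd hd1 hd0)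
    (by simpa [sub_eq_add_neg] using
      hmem (-d) hd.neg (by rwa [norm_neg]) (by rw [map_neg, hd0, neg_zero]))
  simpa [d, hc0] using hVd


theorem mem_extremePoints_choiCPTset_iff {V : Matrix (ι × κ) S ℂ} (hV : (Vᴴ * V).PosDef) :
    V * Vᴴ ∈ Set.extremePoints ℝ (choiCPTset ι κ) ↔
      partialTrace (V * Vᴴ) = 1 ∧ Function.Injective (partialTraceConj V) := by
  constructor
  · intro hext
    refine ⟨hext.1.2, (injective_iff_map_eq_zero _).mpr fun c hc => ?_⟩
    have hherm : ∀ a : selfAdjoint (Matrix S S ℂ), partialTraceConj V a = 0 →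
        (a : Matrix S S ℂ) = 0 := fun a ha =>
      eq_zero_of_mul_mul_conjTranspose_eq_zero hV <|
        mul_mul_conjTranspose_eq_zero_of_mem_extremePoints hext
          (isHermitian_iff_isSelfAdjoint.mpr a.2) ha
    have hstar : partialTraceConj V (star c) = 0 := by
      rw [star_eq_conjTranspose, partialTraceConj_conjTranspose, hc, conjTranspose_zero]
    rw [← realPart_add_I_smul_imaginaryPart c, hherm (realPart c), hherm (imaginaryPart c),
      smul_zero, add_zero]
    · simp only [imaginaryPart_apply_coe, map_smul, LinearMap.map_smul_of_tower, map_sub, hc,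
        hstar, sub_zero, smul_zero]
    · simp only [realPart_apply_coe, LinearMap.map_smul_of_tower, map_add, hc, hstar, add_zero,
        smul_zero]
  · rintro ⟨h1, hinj⟩
    refine mem_extremePoints_iff_left.mpr ⟨⟨posSemidef_self_mul_conjTranspose V, h1⟩, ?_⟩
    rintro C₁ ⟨hC₁, hC₁1⟩ C₂ ⟨hC₂, -⟩ ⟨a, b, ha, hb, -, hC⟩
    obtain ⟨c, hc⟩ := exists_eq_mul_mul_conjTranspose_of_le hV (hC₁.smul ha.le)
      (by rw [← hC, add_sub_cancel_left]; exact hC₂.smul hb.le)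
    have : c = a • 1 := hinj (by simp [← hc, hC₁1, h1])
    rw [this, Matrix.mul_smul, Matrix.smul_mul, Matrix.mul_one] at hc
    exact smul_right_injective _ ha.ne' hc

end Extreme

theorem LinearIndependent.kronecker {K l m p q α β : Type*} [Field K] [Fintype α] [Fintype β]
    {f : α → Matrix l m K} {g : β → Matrix p q K} (hf : LinearIndependent K f)
    (hg : LinearIndependent K g) : LinearIndependent K fun x : α × β => f x.1 ⊗ₖ g x.2 := by
  rw [Fintype.linearIndependent_iff] at hf hg ⊢
  intro c hc ⟨a, b⟩
  have hcol : ∀ i j b, ∑ a, c (a, b) * f a i j = 0 := fun i j => hg _ <| by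
    ext i' j'
    have := congr_fun (congr_fun hc (i, i')) (j, j')
    simp only [Fintype.sum_prod_type, Matrix.sum_apply, Matrix.smul_apply, kronecker_apply,
      smul_eq_mul, Matrix.zero_apply] at this ⊢
    rw [Finset.sum_comm] at this
    simpa [Finset.sum_mul, mul_assoc] using this
  exact hf (fun a => c (a, b)) (by ext i j; simpa [Matrix.sum_apply] using hcol i j b) a

theorem LinearMap.injective_of_map_kronecker {K l m p q l' m' p' q' : Type*} [Field K]
    [Fintype l] [Fintype m] [Fintype l'] [Fintype m'] [DecidableEq l] [DecidableEq m]
    [DecidableEq l'] [DecidableEq m']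
    {f : Matrix l m K →ₗ[K] Matrix p q K} {g : Matrix l' m' K →ₗ[K] Matrix p' q' K}
    {h : Matrix (l × l') (m × m') K →ₗ[K] Matrix (p × p') (q × q') K}
    (hfgh : ∀ A B, h (A ⊗ₖ B) = f A ⊗ₖ g B) (hf : Function.Injective f)
    (hg : Function.Injective g) : Function.Injective h := by
  set e := Equiv.prodProdProdComm l m l' m'
  have hv : ∀ x, stdBasis K _ _ (e x) = stdBasis K l m x.1 ⊗ₖ stdBasis K l' m' x.2 := by
    rintro ⟨⟨i, j⟩, i', j'⟩
    simp only [e, stdBasis_eq_single, single_kronecker_single, mul_one,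
      Equiv.prodProdProdComm_apply]
  refine LinearMap.injective_of_linearIndependent (v := stdBasis K _ _ ∘ e) ?_ ?_
  · rw [Set.range_comp, e.range_eq_univ, Set.image_univ, Module.Basis.span_eq]
  · have hfam : h ∘ stdBasis K _ _ ∘ e =
        fun x => (f ∘ stdBasis K l m) x.1 ⊗ₖ (g ∘ stdBasis K l' m') x.2 :=
      funext fun x => by simp [hv, hfgh]
    rw [hfam]
    exact ((stdBasis K l m).linearIndependent.map' f (ker_eq_bot.mpr hf)).kronecker
      ((stdBasis K l' m').linearIndependent.map' g (ker_eq_bot.mpr hg))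

section Kronecker

variable {R : Type*} [CommSemiring R] {ι κ ι' κ' : Type*}

lemma choi_eq_submatrix_kronecker [Fintype ι] [Fintype ι'] [DecidableEq ι] [DecidableEq ι']
    {ε : Matrix ι ι R →ₗ[R] Matrix κ κ R} {ε' : Matrix ι' ι' R →ₗ[R] Matrix κ' κ' R}
    {T : Matrix (ι × ι') (ι × ι') R →ₗ[R] Matrix (κ × κ') (κ × κ') R}
    (hT : ∀ A B, T (A ⊗ₖ B) = ε A ⊗ₖ ε' B) :
    choi T = (choi ε ⊗ₖ choi ε').submatrix (Equiv.prodProdProdComm ι ι' κ κ')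
      (Equiv.prodProdProdComm ι ι' κ κ') := by
  ext ⟨⟨i, i'⟩, a, a'⟩ ⟨⟨j, j'⟩, b, b'⟩
  rw [choi_apply, ← mul_one (1 : R), ← single_kronecker_single, hT]
  rfl

variable [StarRing R] {S S' : Type*}

lemma submatrix_kronecker_mul_mul_conjTranspose [Fintype S] [Fintype S']
    (V : Matrix (ι × κ) S R) (V' : Matrix (ι' × κ') S' R) (a : Matrix S S R) (b : Matrix S' S' R) :
    (V ⊗ₖ V').submatrix (Equiv.prodProdProdComm ι ι' κ κ') id * (a ⊗ₖ b) *
        ((V ⊗ₖ V').submatrix (Equiv.prodProdProdComm ι ι' κ κ') id)ᴴ =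
      ((V * a * Vᴴ) ⊗ₖ (V' * b * V'ᴴ)).submatrix (Equiv.prodProdProdComm ι ι' κ κ')
        (Equiv.prodProdProdComm ι ι' κ κ') := by
  rw [conjTranspose_submatrix, conjTranspose_kronecker, mul_kronecker_mul, mul_kronecker_mul,
    submatrix_mul _ _ _ id _ Function.bijective_id,
    submatrix_mul _ _ _ id _ Function.bijective_id, submatrix_id_id]

lemma conjTranspose_mul_submatrix_kronecker [Fintype ι] [Fintype ι'] [Fintype κ] [Fintype κ']
    (V : Matrix (ι × κ) S R) (V' : Matrix (ι' × κ') S' R) :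
    ((V ⊗ₖ V').submatrix (Equiv.prodProdProdComm ι ι' κ κ') id)ᴴ *
        (V ⊗ₖ V').submatrix (Equiv.prodProdProdComm ι ι' κ κ') id =
      (Vᴴ * V) ⊗ₖ (V'ᴴ * V') := by
  rw [conjTranspose_submatrix, submatrix_mul_equiv, conjTranspose_kronecker, mul_kronecker_mul,
    submatrix_id_id]

theorem kronecker_mem_extremePoints_choiCPTset [Fintype ι] [Fintype ι'] [Fintype κ] [Fintype κ']
    [DecidableEq ι] [DecidableEq ι'] [Fintype S] [Fintype S'] [DecidableEq S] [DecidableEq S']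
    {V : Matrix (ι × κ) S ℂ} {V' : Matrix (ι' × κ') S' ℂ} (hV : (Vᴴ * V).PosDef)
    (hV' : (V'ᴴ * V').PosDef) (hext : V * Vᴴ ∈ Set.extremePoints ℝ (choiCPTset ι κ))
    (hext' : V' * V'ᴴ ∈ Set.extremePoints ℝ (choiCPTset ι' κ')) :
    ((V * Vᴴ) ⊗ₖ (V' * V'ᴴ)).submatrix (Equiv.prodProdProdComm ι ι' κ κ')
      (Equiv.prodProdProdComm ι ι' κ κ') ∈
        Set.extremePoints ℝ (choiCPTset (ι × ι') (κ × κ')) := by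
  rw [mem_extremePoints_choiCPTset_iff hV] at hext
  rw [mem_extremePoints_choiCPTset_iff hV'] at hext'
  have hconj := submatrix_kronecker_mul_mul_conjTranspose V V'
  have hW := hconj 1 1
  rw [one_kronecker_one, Matrix.mul_one, Matrix.mul_one, Matrix.mul_one] at hW
  rw [← hW, mem_extremePoints_choiCPTset_iff (by
    rw [conjTranspose_mul_submatrix_kronecker]; exact hV.kronecker hV')]
  refine ⟨by rw [hW, partialTrace_submatrix_kronecker, hext.1, hext'.1, one_kronecker_one],
    LinearMap.injective_of_map_kronecker (fun a b => ?_) hext.2 hext'.2⟩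
  simp only [partialTraceConj_apply, hconj, partialTrace_submatrix_kronecker]

end Kronecker

/-- the tensor product (w.r.t. the Kronecker-product identification) of
extreme points of the convex sets of CPT maps is an extreme point of the CPT maps. -/
theorem tensor_of_extreme_CPT_is_extreme {n m n' m' : ℕ}
    (ε : Matrix (Fin n) (Fin n) ℂ →ₗ[ℂ] Matrix (Fin m) (Fin m) ℂ)
    (ε' : Matrix (Fin n') (Fin n') ℂ →ₗ[ℂ] Matrix (Fin m') (Fin m') ℂ)
    (T : Matrix (Fin n × Fin n') (Fin n × Fin n') ℂ →ₗ[ℂ]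
      Matrix (Fin m × Fin m') (Fin m × Fin m') ℂ)
    (hT : ∀ (A : Matrix (Fin n) (Fin n) ℂ) (B : Matrix (Fin n') (Fin n') ℂ),
      T (A ⊗ₖ B) = ε A ⊗ₖ ε' B)
    (hε : ε ∈ Set.extremePoints ℝ (CPTset (Fin n) (Fin m)))
    (hε' : ε' ∈ Set.extremePoints ℝ (CPTset (Fin n') (Fin m'))) :
    T ∈ Set.extremePoints ℝ (CPTset (Fin n × Fin n') (Fin m × Fin m')) := by
  rw [mem_extremePoints_CPTset_iff] at hε hε' ⊢
  obtain ⟨r, V, hV, hVV⟩ := hε.1.1.exists_eq_mul_conjTranspose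
  obtain ⟨r', V', hV', hVV'⟩ := hε'.1.1.exists_eq_mul_conjTranspose
  rw [choi_eq_submatrix_kronecker hT, hV, hV']
  exact kronecker_mem_extremePoints_choiCPTset hVV hVV' (hV ▸ hε) (hV' ▸ hε')
end

section
/- If ε is an extreme point of UCPT(n), then its Choi rank satisfies CR(ε)² ≤ 2·n², i.e. CR(ε) ≤ √2·n. -/
open Matrix Kronecker

/-! Write `ε A = ∑ k, E k * A * (E k)ᴴ` with `CR ε` Kraus operators; such a minimal family is
linearly independent, since a unitary mixing of the `E k` turns a linear dependency into a zero
Kraus operator. For a Hermitian `G` and small real `t` the maps `A ↦ ∑ (1 ± t G) i j • E i A (E j)ᴴ`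
are completely positive, and if `∑ G i j • (E j)ᴴ E i = 0` and `∑ G i j • E i (E j)ᴴ = 0` they are
also trace preserving and unital. Their midpoint is `ε`, so extremality forces `G = 0`, and then
so does every `G` satisfying the two linear conditions (they are stable under `ᴴ`). Hence the `r²`
pairs `((E j)ᴴ E i, E i (E j)ᴴ)` are linearly independent in `Mₙ × Mₙ`, of dimension `2 n²`. -/

open scoped ComplexOrder

lemma exists_mem_unitaryGroup_apply_eq {ρ : Type*} [Fintype ρ] [DecidableEq ρ]
    (u : EuclideanSpace ℂ ρ) (hu : ‖u‖ = 1) (k : ρ) :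
    ∃ U ∈ unitaryGroup ρ ℂ, ∀ i, U i k = u i := by
  have hortho : Orthonormal ℂ (({k} : Set ρ).domRestrict fun _ => u) := by
    rw [orthonormal_iff_ite]
    rintro ⟨i, rfl⟩ ⟨j, rfl⟩
    simp [Set.domRestrict, hu]
  obtain ⟨b, hb⟩ := hortho.exists_orthonormalBasis_extension_of_card_eq (by simp)
  refine ⟨(EuclideanSpace.basisFun ρ ℂ).toBasis.toMatrix b,
    (EuclideanSpace.basisFun ρ ℂ).toMatrix_orthonormalBasis_mem_unitary b, fun i => ?_⟩
  simp [Module.Basis.toMatrix_apply, hb k rfl]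

open scoped Matrix.Norms.L2Operator MatrixOrder in
lemma Matrix.IsHermitian.exists_pos_posSemidef_one_add_smul {ι : Type*} [Fintype ι]
    [DecidableEq ι] {G : Matrix ι ι ℂ} (hG : G.IsHermitian) :
    ∃ t : ℝ, 0 < t ∧ ∀ s : ℝ, |s| ≤ t → (1 + (s : ℂ) • G).PosSemidef := by
  refine ⟨(‖G‖ + 1)⁻¹, by positivity, fun s hs => ?_⟩
  have hsG : IsSelfAdjoint ((s : ℂ) • G) :=
    IsSelfAdjoint.smul (Complex.conj_ofReal s) hG.isSelfAdjoint
  have hnorm : ‖(s : ℂ) • G‖ ≤ 1 := by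
    rw [norm_smul, Complex.norm_real, Real.norm_eq_abs]
    calc |s| * ‖G‖ ≤ (‖G‖ + 1)⁻¹ * (‖G‖ + 1) := by gcongr; linarith
      _ = 1 := inv_mul_cancel₀ (by positivity)
  rw [← nonneg_iff_posSemidef]
  calc (0 : Matrix ι ι ℂ) ≤ algebraMap ℝ _ 1 - algebraMap ℝ _ ‖(s : ℂ) • G‖ := by
        rw [← map_sub]; exact algebraMap_nonneg _ (sub_nonneg.mpr hnorm)
    _ ≤ 1 + (s : ℂ) • G := by
        rw [map_one, sub_eq_add_neg]; gcongr; exact hsG.neg_algebraMap_norm_le_self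

lemma Submodule.eq_bot_of_star_mem_of_isSelfAdjoint {A : Type*} [AddCommGroup A] [Module ℂ A]
    [StarAddMonoid A] [StarModule ℂ A] (p : Submodule ℂ A) (hstar : ∀ x ∈ p, star x ∈ p)
    (hsa : ∀ x ∈ p, IsSelfAdjoint x → x = 0) : p = ⊥ := by
  refine (Submodule.eq_bot_iff p).mpr fun x hx => ?_
  have hre : (realPart x : A) ∈ p := by
    rw [realPart_apply_coe]
    exact p.smul_of_tower_mem _ (p.add_mem hx (hstar x hx))
  have him : (imaginaryPart x : A) ∈ p := by
    rw [imaginaryPart_apply_coe]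
    exact p.smul_mem _ (p.smul_of_tower_mem _ (p.sub_mem hx (hstar x hx)))
  rw [← realPart_add_I_smul_imaginaryPart x, hsa _ hre (realPart x).2,
    hsa _ him (imaginaryPart x).2, smul_zero, add_zero]

lemma eq_zero_of_add_mem_of_sub_mem_of_mem_extremePoints_s5 {V : Type*} [AddCommGroup V]
    [Module ℝ V] {C : Set V} {x v : V} (hx : x ∈ C.extremePoints ℝ) (hadd : x + v ∈ C)
    (hsub : x - v ∈ C) : v = 0 :=
  add_eq_left.mp <| hx.2 hadd hsub ⟨1 / 2, 1 / 2, by norm_num, by norm_num, by norm_num, by module⟩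

section KrausGram

variable {ι κ ρ σ : Type*} [Fintype ι] [Fintype ρ]

lemma isCP_of_kraus (Φ : Matrix ι ι ℂ →ₗ[ℂ] Matrix κ κ ℂ) (F : ρ → Matrix κ ι ℂ)
    (h : ∀ A, Φ A = ∑ k, F k * A * (F k)ᴴ) : IsCP Φ :=
  ⟨_, F ∘ (Fintype.equivFin ρ).symm, fun A => by
    rw [h]; exact ((Fintype.equivFin ρ).symm.sum_comp fun k => F k * A * (F k)ᴴ).symm⟩

noncomputable def krausGramMap (E : ρ → Matrix κ ι ℂ) :
    Matrix ρ ρ ℂ →ₗ[ℂ] Matrix ι ι ℂ →ₗ[ℂ] Matrix κ κ ℂ :=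
  LinearMap.mk₂ ℂ (fun G A => ∑ i, ∑ j, G i j • (E i * A * (E j)ᴴ))
    (fun _ _ _ => by simp only [Matrix.add_apply, add_smul, Finset.sum_add_distrib])
    (fun _ _ _ => by simp only [Matrix.smul_apply, smul_eq_mul, mul_smul, Finset.smul_sum])
    (fun _ _ _ => by simp only [Matrix.mul_add, Matrix.add_mul, smul_add, Finset.sum_add_distrib])
    (fun _ _ _ => by
      simp only [Matrix.mul_smul, Matrix.smul_mul, Finset.smul_sum, smul_smul, mul_comm])

@[simp]
lemma krausGramMap_apply (E : ρ → Matrix κ ι ℂ) (G : Matrix ρ ρ ℂ) (A : Matrix ι ι ℂ) :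
    krausGramMap E G A = ∑ i, ∑ j, G i j • (E i * A * (E j)ᴴ) :=
  rfl

lemma krausGramMap_one [DecidableEq ρ] (E : ρ → Matrix κ ι ℂ) (A : Matrix ι ι ℂ) :
    krausGramMap E 1 A = ∑ i, E i * A * (E i)ᴴ := by
  simp [one_apply, ite_smul]

lemma krausGramMap_mul_conjTranspose [Fintype σ] (E : ρ → Matrix κ ι ℂ) (B : Matrix ρ σ ℂ)
    (A : Matrix ι ι ℂ) :
    krausGramMap E (B * Bᴴ) A = ∑ k, (∑ i, B i k • E i) * A * (∑ i, B i k • E i)ᴴ := by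
  simp only [krausGramMap_apply, mul_apply, conjTranspose_apply, Finset.sum_smul,
    conjTranspose_sum, conjTranspose_smul, Matrix.sum_mul, Matrix.mul_sum, Matrix.smul_mul,
    Matrix.mul_smul, Finset.smul_sum, smul_smul]
  conv_rhs => rw [Finset.sum_comm]; enter [2, j]; rw [Finset.sum_comm]
  rw [Finset.sum_comm]
  simp only [mul_comm]

lemma isCP_krausGramMap (E : ρ → Matrix κ ι ℂ) {G : Matrix ρ ρ ℂ} (hG : G.PosSemidef) :
    IsCP (krausGramMap E G) := by
  classical
  obtain ⟨B, rfl⟩ : ∃ B, G = B * Bᴴ := by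
    open scoped MatrixOrder in exact CStarAlgebra.nonneg_iff_eq_mul_star_self.mp hG.nonneg
  exact isCP_of_kraus _ _ (krausGramMap_mul_conjTranspose E B)

lemma krausGramMap_conjTranspose (E : ρ → Matrix κ ι ℂ) (G : Matrix ρ ρ ℂ)
    (A : Matrix ι ι ℂ) : krausGramMap E Gᴴ Aᴴ = (krausGramMap E G A)ᴴ := by
  simp only [krausGramMap_apply, conjTranspose_sum, conjTranspose_smul, conjTranspose_mul,
    conjTranspose_conjTranspose, conjTranspose_apply, Matrix.mul_assoc]
  exact Finset.sum_comm

lemma trace_krausGramMap [Fintype κ] (E : ρ → Matrix κ ι ℂ) (G : Matrix ρ ρ ℂ)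
    (A : Matrix ι ι ℂ) :
    (krausGramMap E G A).trace = ((∑ i, ∑ j, G i j • ((E j)ᴴ * E i)) * A).trace := by
  simp only [krausGramMap_apply, trace_sum, trace_smul, Matrix.sum_mul, Matrix.smul_mul,
    trace_mul_cycle (E _) A]

end KrausGram

section LinearIndependence

variable {ι κ ρ : Type*} [Fintype ι] [Fintype ρ]

lemma eq_zero_of_forall_sum_mul_mul_conjTranspose_eq_zero {E : ρ → Matrix κ ι ℂ}
    (hE : LinearIndependent ℂ E) (H : ρ → Matrix κ ι ℂ)
    (h : ∀ A : Matrix ι ι ℂ, ∑ i, E i * A * (H i)ᴴ = 0) : H = 0 := by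
  classical
  ext i b p
  have hcomb : ∑ i, star (H i b p) • E i = 0 := by
    ext a q
    have := congrFun (congrFun (h (single q p 1)) a) b
    simpa [Matrix.sum_apply, Matrix.mul_apply, single, ite_and, mul_comm] using this
  simpa using Fintype.linearIndependent_iff.mp hE _ hcomb i

lemma eq_zero_of_krausGramMap_eq_zero {E : ρ → Matrix κ ι ℂ} (hE : LinearIndependent ℂ E)
    {G : Matrix ρ ρ ℂ} (hG : krausGramMap E G = 0) : G = 0 := by
  have hH := eq_zero_of_forall_sum_mul_mul_conjTranspose_eq_zero hE
    (fun i => ∑ j, star (G i j) • E j) fun A => by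
      simpa [conjTranspose_sum, Matrix.mul_sum] using LinearMap.congr_fun hG A
  ext i j
  simpa using Fintype.linearIndependent_iff.mp hE _ (congrFun hH i) j

end LinearIndependence

section KrausRank

variable {ι κ : Type*} [Fintype ι]

lemma exists_kraus_lt_of_not_linearIndependent {Φ : Matrix ι ι ℂ →ₗ[ℂ] Matrix κ κ ℂ} {N : ℕ}
    {E : Fin N → Matrix κ ι ℂ} (hE : ∀ A, Φ A = ∑ k, E k * A * (E k)ᴴ)
    (hdep : ¬ LinearIndependent ℂ E) :
    ∃ M < N, ∃ F : Fin M → Matrix κ ι ℂ, ∀ A, Φ A = ∑ k, F k * A * (F k)ᴴ := by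
  obtain ⟨g, hg, i, hgi⟩ := Fintype.not_linearIndependent_iff.mp hdep
  obtain ⟨M, rfl⟩ := Nat.exists_eq_add_one_of_ne_zero i.pos.ne'
  set v : EuclideanSpace ℂ (Fin (M + 1)) := WithLp.toLp 2 g
  have hv : v ≠ 0 := fun h => hgi (by simpa using congrFun (congrArg WithLp.ofLp h) i)
  obtain ⟨U, hU, hU0⟩ := exists_mem_unitaryGroup_apply_eq (‖v‖⁻¹ • v) (norm_smul_inv_norm hv) 0
  set F : Fin (M + 1) → Matrix κ ι ℂ := fun k => ∑ i, U i k • E i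
  have hF0 : F 0 = 0 := by
    simp only [F, hU0, WithLp.ofLp_smul, Pi.smul_apply, smul_assoc, ← Finset.smul_sum]
    simp [v, hg]
  refine ⟨M, M.lt_add_one, F ∘ Fin.succ, fun A => ?_⟩
  rw [hE, ← krausGramMap_one, ← mem_unitaryGroup_iff.mp hU, star_eq_conjTranspose,
    krausGramMap_mul_conjTranspose, Fin.sum_univ_succ]
  simp [F, hF0]

lemma CR_le_of_kraus {Φ : Matrix ι ι ℂ →ₗ[ℂ] Matrix κ κ ℂ} {M : ℕ} (F : Fin M → Matrix κ ι ℂ)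
    (hF : ∀ A, Φ A = ∑ k, F k * A * (F k)ᴴ) : CR Φ ≤ M :=
  Nat.sInf_le ⟨F, hF⟩

lemma exists_linearIndependent_kraus_of_isCP {Φ : Matrix ι ι ℂ →ₗ[ℂ] Matrix κ κ ℂ}
    (hΦ : IsCP Φ) :
    ∃ E : Fin (CR Φ) → Matrix κ ι ℂ,
      (∀ A, Φ A = ∑ k, E k * A * (E k)ᴴ) ∧ LinearIndependent ℂ E := by
  obtain ⟨E, hE⟩ : CR Φ ∈ {N | ∃ E : Fin N → Matrix κ ι ℂ, ∀ A, Φ A = ∑ k, E k * A * (E k)ᴴ} :=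
    Nat.sInf_mem hΦ
  refine ⟨E, hE, by_contra fun hdep => ?_⟩
  obtain ⟨M, hM, F, hF⟩ := exists_kraus_lt_of_not_linearIndependent hE hdep
  exact (CR_le_of_kraus F hF).not_gt hM

end KrausRank

section Extreme

variable {ι : Type*} [Fintype ι] [DecidableEq ι]
  {ε : Matrix ι ι ℂ →ₗ[ℂ] Matrix ι ι ℂ} (hε : ε ∈ (UCPTset ι).extremePoints ℝ)
  {r : ℕ} {E : Fin r → Matrix ι ι ℂ} (hE : ∀ A, ε A = ∑ k, E k * A * (E k)ᴴ)
include hε hE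

lemma krausGramMap_eq_zero_of_mem_extremePoints {G : Matrix (Fin r) (Fin r) ℂ}
    (hG : G.IsHermitian) (htr : ∀ A, (krausGramMap E G A).trace = 0)
    (hunit : krausGramMap E G 1 = 0) : krausGramMap E G = 0 := by
  obtain ⟨t, ht, hpos⟩ := hG.exists_pos_posSemidef_one_add_smul
  obtain ⟨-, hTP, hU⟩ := hε.1
  have hε1 : ε = krausGramMap E 1 := LinearMap.ext fun A => by rw [hE, krausGramMap_one]
  have mem : ∀ s : ℝ, |s| ≤ t → ε + krausGramMap E ((s : ℂ) • G) ∈ UCPTset ι := by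
    intro s hs
    refine ⟨?_, fun A => ?_, ?_⟩
    · rw [hε1, ← map_add]
      exact isCP_krausGramMap E (hpos s hs)
    · simp only [LinearMap.add_apply, map_smul, LinearMap.smul_apply, trace_add, trace_smul, htr,
        smul_zero, add_zero, hTP A]
    · simpa [IsUnital, hunit] using hU
  have hzero := eq_zero_of_add_mem_of_sub_mem_of_mem_extremePoints_s5 hε
    (mem t (abs_of_pos ht).le)
    (by simpa [sub_eq_add_neg, abs_of_pos ht] using mem (-t))
  rw [map_smul, smul_eq_zero] at hzero
  exact hzero.resolve_left (Complex.ofReal_ne_zero.mpr ht.ne')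

lemma eq_zero_of_mem_extremePoints (hli : LinearIndependent ℂ E) {G : Matrix (Fin r) (Fin r) ℂ}
    (htr : ∀ A, (krausGramMap E G A).trace = 0) (hunit : krausGramMap E G 1 = 0) : G = 0 := by
  let p : Submodule ℂ (Matrix (Fin r) (Fin r) ℂ) :=
    (⨅ A, LinearMap.ker (traceLinearMap ι ℂ ℂ ∘ₗ (krausGramMap E).flip A)) ⊓
      LinearMap.ker ((krausGramMap E).flip 1)
  have hmem : ∀ G, G ∈ p ↔ (∀ A, (krausGramMap E G A).trace = 0) ∧ krausGramMap E G 1 = 0 := by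
    simp [p]
  have hp : p = ⊥ := by
    refine p.eq_bot_of_star_mem_of_isSelfAdjoint (fun G hG => ?_) fun G hG hsa =>
      eq_zero_of_krausGramMap_eq_zero hli <|
        krausGramMap_eq_zero_of_mem_extremePoints hε hE hsa ((hmem G).1 hG).1 ((hmem G).1 hG).2
    obtain ⟨htr, hunit⟩ := (hmem G).1 hG
    refine (hmem _).2 ⟨fun A => ?_, ?_⟩
    · rw [star_eq_conjTranspose, ← conjTranspose_conjTranspose A, krausGramMap_conjTranspose,
        trace_conjTranspose, htr, star_zero]
    · rw [star_eq_conjTranspose, ← conjTranspose_one, krausGramMap_conjTranspose, hunit,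
        conjTranspose_zero]
  simpa [hp] using (hmem G).2 ⟨htr, hunit⟩

theorem linearIndependent_of_mem_extremePoints (hli : LinearIndependent ℂ E) :
    LinearIndependent ℂ fun p : Fin r × Fin r => ((E p.2)ᴴ * E p.1, E p.1 * (E p.2)ᴴ) := by
  refine Fintype.linearIndependent_iff.mpr fun g hg p => ?_
  have hG := eq_zero_of_mem_extremePoints hε hE hli (G := Matrix.of fun i j => g (i, j))
    (fun A => by
      rw [trace_krausGramMap]
      simpa [Fintype.sum_prod_type, Prod.fst_sum] using congrArg (fun x => (x.1 * A).trace) hg)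
    (by simpa [Fintype.sum_prod_type, Prod.snd_sum] using congrArg Prod.snd hg)
  exact congrFun (congrFun hG p.1) p.2

theorem sq_le_of_mem_extremePoints (hli : LinearIndependent ℂ E) :
    r ^ 2 ≤ 2 * Fintype.card ι ^ 2 := by
  have := (linearIndependent_of_mem_extremePoints hε hE hli).fintype_card_le_finrank
  simp only [Fintype.card_prod, Fintype.card_fin, Module.finrank_prod, Module.finrank_matrix,
    Module.finrank_self] at this
  linarith

end Extreme

/-- the Choi rank of an extreme UCPT map satisfies CR(ε)² ≤ 2n²,
i.e. CR(ε) ≤ √2·n. -/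
theorem choiRank_le_of_extreme_UCPT {n : ℕ}
    (ε : Matrix (Fin n) (Fin n) ℂ →ₗ[ℂ] Matrix (Fin n) (Fin n) ℂ)
    (hε : ε ∈ Set.extremePoints ℝ (UCPTset (Fin n))) :
    CR ε ^ 2 ≤ 2 * n ^ 2 ∧ (CR ε : ℝ) ≤ Real.sqrt 2 * n := by
  obtain ⟨E, hE, hli⟩ := exists_linearIndependent_kraus_of_isCP hε.1.1
  have hsq : CR ε ^ 2 ≤ 2 * n ^ 2 := by simpa using sq_le_of_mem_extremePoints hε hE hli
  refine ⟨hsq, ?_⟩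
  rw [← Real.sqrt_sq (Nat.cast_nonneg n), ← Real.sqrt_mul zero_le_two,
    Real.le_sqrt (Nat.cast_nonneg _) (by positivity)]
  exact_mod_cast hsq
end
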